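/- arXiv:1401.2836 — 3 statements merged into one kernel-verified Lean document; each statement's English description precedes it below -/
import Mathlib

section
/- Let S be a semiring (commutative, possibly without neutral elements) and let A be a nonempty subset of S such that there exists m ≥ 1 with ord(a) ≤ m for every a ∈ A. Then there exists n ≥ 1 such that ord(b) ≤ n for every b in the subsemiring ⟨A⟩ generated by A, and moreover there exists r ≥ 1 such that (2r)·b = r·b for every b ∈ ⟨A⟩. -/
/-- `nmul n a` is the `n`-fold sum `a + ⋯ + a` (for `n ≥ 1`; `nmul 0 a = a` is junk). -/
def nmul {S : Type*} [Add S] (n : ℕ) (a : S) : S :=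
  Nat.rec a (fun _ b => b + a) (n - 1)

/-- The set `{n·a : n ≥ 1}`. -/
def addOrbit {S : Type*} [Add S] (a : S) : Set S :=
  {x | ∃ n : ℕ, 1 ≤ n ∧ nmul n a = x}

/-- The subsemiring generated by `A`: the smallest subset of `S` containing `A`
and closed under addition and multiplication. -/
def genClosure {S : Type*} [Add S] [Mul S] (A : Set S) : Set S :=
  ⋂₀ {T : Set S | A ⊆ T ∧ (∀ x ∈ T, ∀ y ∈ T, x + y ∈ T) ∧ (∀ x ∈ T, ∀ y ∈ T, x * y ∈ T)}


/-!
Adjoining a zero to the additive semigroup turns `n·a` into the `n • a` of a monoid.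
If `ord(a) ≤ m`, two of `1·a, …, (m+1)·a` coincide, say `(i+p)·a = i·a` with `i, p ≤ m`; then
`k ↦ k·a` is `p`-periodic from `i` on, and as `i ≤ m!` and `p ∣ m!` we get `(2·m!)·a = m!·a`.
This identity survives sums and products, because `n·(x+y) = n·x + n·y` and `(n·x)y = n·(xy)`,
so it holds on all of `⟨A⟩`; and for such `b` every `k·b` is one of `1·b, …, (2·m!)·b`.
-/

open scoped Nat

section Monoid

variable {M : Type*} [AddMonoid M] {x : M} {i p : ℕ}

theorem add_mul_nsmul_eq_of_add_nsmul_eq (h : (i + p) • x = i • x) (k : ℕ) :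
    (i + k * p) • x = i • x := by
  induction k with
  | zero => simp
  | succ k ih => rw [add_mul, one_mul, ← add_assoc, add_nsmul, ih, ← add_nsmul, h]

theorem nsmul_eq_add_mod_nsmul_of_add_nsmul_eq (h : (i + p) • x = i • x) {n : ℕ} (hn : i ≤ n) :
    n • x = (i + (n - i) % p) • x := by
  have hsplit : n = (n - i) % p + (i + (n - i) / p * p) := by
    have := Nat.mod_add_div (n - i) p
    rw [mul_comm] at this
    omega
  rw [hsplit, add_nsmul, add_mul_nsmul_eq_of_add_nsmul_eq h, ← add_nsmul, add_comm, ← hsplit]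

end Monoid

theorem nmul_succ {S : Type*} [Add S] {n : ℕ} (hn : 1 ≤ n) (a : S) :
    nmul (n + 1) a = nmul n a + a := by
  obtain ⟨k, rfl⟩ := Nat.exists_eq_add_of_le' hn
  rfl

theorem coe_nmul {S : Type*} [AddSemigroup S] {n : ℕ} (hn : 1 ≤ n) (a : S) :
    ((nmul n a : S) : WithZero S) = n • (a : WithZero S) := by
  induction n, hn using Nat.le_induction with
  | base => simp [nmul]
  | succ n hn ih => rw [nmul_succ hn, WithZero.coe_add, ih, succ_nsmul]

theorem nmul_add {S : Type*} [AddCommSemigroup S] (n : ℕ) (a b : S) :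
    nmul n (a + b) = nmul n a + nmul n b := by
  unfold nmul
  induction n - 1 with
  | zero => rfl
  | succ k ih => simp only [ih, add_add_add_comm]

theorem nmul_mul {S : Type*} [Add S] [Mul S] (hdr : ∀ a b c : S, (a + b) * c = a * c + b * c)
    (n : ℕ) (a c : S) : nmul n a * c = nmul n (a * c) := by
  unfold nmul
  induction n - 1 with
  | zero => rfl
  | succ k ih => simp only [hdr, ih]

theorem genClosure_subset {S : Type*} [Add S] [Mul S] {A T : Set S} (hAT : A ⊆ T)
    (hadd : ∀ x ∈ T, ∀ y ∈ T, x + y ∈ T) (hmul : ∀ x ∈ T, ∀ y ∈ T, x * y ∈ T) :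
    genClosure A ⊆ T :=
  Set.sInter_subset_of_mem ⟨hAT, hadd, hmul⟩

theorem exists_nmul_add_eq_of_ncard_addOrbit_le {S : Type*} [Add S] {a : S} {m : ℕ}
    (hfin : (addOrbit a).Finite) (hcard : (addOrbit a).ncard ≤ m) :
    ∃ i p, 1 ≤ i ∧ 1 ≤ p ∧ i + p ≤ m + 1 ∧ nmul (i + p) a = nmul i a := by
  have hlt : (addOrbit a).ncard < (Set.Icc 1 (m + 1)).ncard := by
    rw [Set.ncard_Icc_nat]; omega
  obtain ⟨j, ⟨hj1, hj2⟩, k, ⟨hk1, hk2⟩, hne, heq⟩ :=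
    Set.exists_ne_map_eq_of_ncard_lt_of_maps_to hlt (fun n hn => ⟨n, hn.1, rfl⟩) hfin
  rcases Nat.lt_or_gt_of_ne hne with hjk | hkj
  · exact ⟨j, k - j, hj1, by omega, by omega, by rw [Nat.add_sub_cancel' hjk.le, heq]⟩
  · exact ⟨k, j - k, hk1, by omega, by omega, by rw [Nat.add_sub_cancel' hkj.le, heq]⟩

theorem nmul_two_mul_factorial_eq {S : Type*} [AddSemigroup S] {a : S} {m : ℕ}
    (hfin : (addOrbit a).Finite) (hcard : (addOrbit a).ncard ≤ m) :
    nmul (2 * m !) a = nmul (m !) a := by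
  obtain ⟨i, p, hi, hp, hip, h⟩ := exists_nmul_add_eq_of_ncard_addOrbit_le hfin hcard
  rw [← WithZero.coe_inj, coe_nmul (by omega), coe_nmul hi] at h
  have him : i ≤ m ! := (show i ≤ m by omega).trans m.self_le_factorial
  obtain ⟨c, hc⟩ := Nat.dvd_factorial hp (show p ≤ m by omega)
  have hmod : (2 * (m !) - i) % p = ((m !) - i) % p := by
    rw [show 2 * (m !) - i = (m !) - i + p * c by omega, Nat.add_mul_mod_self_left]
  rw [← WithZero.coe_inj, coe_nmul (by have := m.factorial_pos; omega), coe_nmul m.factorial_pos,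
    nsmul_eq_add_mod_nsmul_of_add_nsmul_eq h (by omega),
    nsmul_eq_add_mod_nsmul_of_add_nsmul_eq h him, hmod]

theorem addOrbit_finite_ncard_le_of_nmul_two_mul_eq {S : Type*} [AddSemigroup S] {b : S} {r : ℕ}
    (hr : 1 ≤ r) (h : nmul (2 * r) b = nmul r b) :
    (addOrbit b).Finite ∧ (addOrbit b).ncard ≤ 2 * r := by
  rw [← WithZero.coe_inj, coe_nmul (by omega), coe_nmul hr, two_mul] at h
  have hsub : addOrbit b ⊆ (fun k => nmul k b) '' Set.Icc 1 (2 * r) := by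
    rintro _ ⟨k, hk, rfl⟩
    by_cases hkr : k < r
    · exact ⟨k, ⟨hk, by omega⟩, rfl⟩
    · refine ⟨r + (k - r) % r, ⟨by omega, by have := Nat.mod_lt (k - r) hr; omega⟩, ?_⟩
      rw [← WithZero.coe_inj, coe_nmul (by omega), coe_nmul hk,
        nsmul_eq_add_mod_nsmul_of_add_nsmul_eq h (n := k) (by omega)]
  refine ⟨(Set.finite_Icc 1 (2 * r)).image _ |>.subset hsub, ?_⟩
  calc (addOrbit b).ncard ≤ ((fun k => nmul k b) '' Set.Icc 1 (2 * r)).ncard :=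
        Set.ncard_le_ncard hsub ((Set.finite_Icc 1 (2 * r)).image _)
    _ ≤ (Set.Icc 1 (2 * r)).ncard := Set.ncard_image_le (Set.finite_Icc 1 (2 * r))
    _ = 2 * r := by simp

theorem stmt_0_general {S : Type*} [AddCommSemigroup S] [CommSemigroup S]
    (hdr : ∀ a b c : S, (a + b) * c = a * c + b * c)
    (A : Set S) (m : ℕ)
    (hbound : ∀ a ∈ A, (addOrbit a).Finite ∧ (addOrbit a).ncard ≤ m) :
    (∃ n : ℕ, 1 ≤ n ∧ ∀ b ∈ genClosure A, (addOrbit b).Finite ∧ (addOrbit b).ncard ≤ n) ∧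
    (∃ r : ℕ, 1 ≤ r ∧ ∀ b ∈ genClosure A, nmul (2 * r) b = nmul r b) := by
  have hclosure : genClosure A ⊆ {b | nmul (2 * m !) b = nmul (m !) b} :=
    genClosure_subset (fun a ha => nmul_two_mul_factorial_eq (hbound a ha).1 (hbound a ha).2)
      (fun x (hx : _ = _) y (hy : _ = _) => show _ = _ by rw [nmul_add, nmul_add, hx, hy])
      (fun x (hx : _ = _) y _ => show _ = _ by rw [← nmul_mul hdr, ← nmul_mul hdr, hx])
  exact ⟨⟨2 * m !, by have := m.factorial_pos; omega, fun b hb =>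
      addOrbit_finite_ncard_le_of_nmul_two_mul_eq m.factorial_pos (hclosure hb)⟩,
    ⟨m !, m.factorial_pos, fun _ hb => hclosure hb⟩⟩

theorem stmt_0 {S : Type*} [AddCommSemigroup S] [CommSemigroup S]
    (hdl : ∀ a b c : S, a * (b + c) = a * b + a * c)
    (hdr : ∀ a b c : S, (a + b) * c = a * c + b * c)
    (A : Set S) (hA : A.Nonempty) (m : ℕ) (hm : 1 ≤ m)
    (hbound : ∀ a ∈ A, (addOrbit a).Finite ∧ (addOrbit a).ncard ≤ m) :
    (∃ n : ℕ, 1 ≤ n ∧ ∀ b ∈ genClosure A, (addOrbit b).Finite ∧ (addOrbit b).ncard ≤ n) ∧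
    (∃ r : ℕ, 1 ≤ r ∧ ∀ b ∈ genClosure A, nmul (2 * r) b = nmul r b) :=
  stmt_0_general hdr A m hbound
end

section
/- Let S be a semiring (commutative, possibly without neutral elements) that is additively divisible and bounded, i.e., there exists m ≥ 1 such that ord(a) ≤ m for every a ∈ S. Then S is additively idempotent. -/
open Function

section Periodic

variable {α : Type*} {f : α → α} {x : α} {m : ℕ}

theorem exists_isPeriodicPt_iterate_of_ncard_le (hfin : (Set.range fun k => f^[k] x).Finite)
    (hcard : (Set.range fun k => f^[k] x).ncard ≤ m) :
    ∃ i p, 0 < p ∧ i + p ≤ m ∧ IsPeriodicPt f p (f^[i] x) := by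
  have hlt : hfin.toFinset.card < (Finset.range (m + 1)).card := by
    rw [Finset.card_range, ← Set.ncard_eq_toFinset_card _ hfin]
    omega
  have hmaps : ∀ k ∈ Finset.range (m + 1), f^[k] x ∈ hfin.toFinset := fun k _ => by simp
  obtain ⟨i, hi, j, hj, hne, heq⟩ := Finset.exists_ne_map_eq_of_card_lt_of_maps_to hlt hmaps
  rw [Finset.mem_range] at hi hj
  wlog hij : i < j generalizing i j
  · exact this j hj i hi hne.symm heq.symm (by omega)
  refine ⟨i, j - i, by omega, by omega, ?_⟩
  rw [IsPeriodicPt, IsFixedPt, ← iterate_add_apply, Nat.sub_add_cancel hij.le, heq]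

theorem isPeriodicPt_factorial_iterate_of_ncard_le (hfin : (Set.range fun k => f^[k] x).Finite)
    (hcard : (Set.range fun k => f^[k] x).ncard ≤ m) {n : ℕ} (hn : m ≤ n + 1) :
    IsPeriodicPt f m.factorial (f^[n] x) := by
  obtain ⟨i, p, hp, hip, hper⟩ := exists_isPeriodicPt_iterate_of_ncard_le hfin hcard
  have hper_n : IsPeriodicPt f p (f^[n] x) := by
    rw [← Nat.sub_add_cancel (show i ≤ n by omega), iterate_add_apply]
    exact hper.apply_iterate (n - i)
  exact hper_n.trans_dvd (Nat.dvd_factorial hp (by omega))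

end Periodic

section NMul

variable {S : Type*}

theorem nmul_succ_eq_iterate [Add S] (a : S) (k : ℕ) : nmul (k + 1) a = (· + a)^[k] a := by
  induction k with
  | zero => rfl
  | succ k ih =>
    rw [iterate_succ_apply', ← ih]
    rfl

theorem addOrbit_eq_range [Add S] (a : S) : addOrbit a = Set.range fun k => (· + a)^[k] a := by
  ext x
  constructor
  · rintro ⟨n, hn, rfl⟩
    exact ⟨n - 1, by dsimp only; rw [← nmul_succ_eq_iterate, Nat.sub_add_cancel hn]⟩
  · rintro ⟨k, rfl⟩
    exact ⟨k + 1, by omega, nmul_succ_eq_iterate a k⟩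

theorem nmul_add_one [Add S] (a : S) {k : ℕ} (hk : 1 ≤ k) : nmul (k + 1) a = nmul k a + a := by
  obtain ⟨k, rfl⟩ := Nat.exists_eq_add_of_le' hk
  rfl

theorem nmul_add_s4 [AddSemigroup S] (a : S) {k l : ℕ} (hk : 1 ≤ k) (hl : 1 ≤ l) :
    nmul (k + l) a = nmul k a + nmul l a := by
  induction l, hl using Nat.le_induction with
  | base => exact nmul_add_one a hk
  | succ l hl ih => rw [← add_assoc, nmul_add_one a (by omega), ih, nmul_add_one a hl, add_assoc]

theorem nmul_factorial_add_factorial [AddSemigroup S] {a : S} {m : ℕ} (hfin : (addOrbit a).Finite)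
    (hcard : (addOrbit a).ncard ≤ m) :
    nmul (m.factorial + m.factorial) a = nmul m.factorial a := by
  rw [addOrbit_eq_range] at hfin hcard
  have hpos := m.factorial_pos
  have hper := isPeriodicPt_factorial_iterate_of_ncard_le hfin hcard
    (n := m.factorial - 1) (by have := m.self_le_factorial; omega)
  calc nmul (m.factorial + m.factorial) a = nmul (m.factorial + (m.factorial - 1) + 1) a := by
        congr 1; omega
    _ = (· + a)^[m.factorial] ((· + a)^[m.factorial - 1] a) := by
        rw [nmul_succ_eq_iterate, iterate_add_apply]
    _ = nmul (m.factorial - 1 + 1) a := by rw [hper.eq, nmul_succ_eq_iterate]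
    _ = nmul m.factorial a := by rw [Nat.sub_add_cancel hpos]

end NMul

theorem stmt_4_general {S : Type*} [AddCommSemigroup S]
    (hdiv : ∀ a : S, ∀ n : ℕ, 1 ≤ n → ∃ b : S, nmul n b = a)
    (m : ℕ)
    (hbound : ∀ a : S, (addOrbit a).Finite ∧ (addOrbit a).ncard ≤ m) :
    ∀ a : S, a + a = a := by
  intro a
  obtain ⟨b, rfl⟩ := hdiv a m.factorial m.factorial_pos
  obtain ⟨hfin, hcard⟩ := hbound b
  rw [← nmul_add_s4 b m.factorial_pos m.factorial_pos, nmul_factorial_add_factorial hfin hcard]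

theorem stmt_4 {S : Type*} [AddCommSemigroup S] [CommSemigroup S]
    (hdl : ∀ a b c : S, a * (b + c) = a * b + a * c)
    (hdr : ∀ a b c : S, (a + b) * c = a * c + b * c)
    (hdiv : ∀ a : S, ∀ n : ℕ, 1 ≤ n → ∃ b : S, nmul n b = a)
    (m : ℕ) (hm : 1 ≤ m)
    (hbound : ∀ a : S, (addOrbit a).Finite ∧ (addOrbit a).ncard ≤ m) :
    ∀ a : S, a + a = a :=
  stmt_4_general hdiv m hbound
end

section
/- Let R be a nonzero commutative ring, not necessarily unital, that is finitely generated as a ring (there is a finite subset generating R as a non-unital subring). Then R is not additively divisible: there exist a ∈ R and n ≥ 1 such that a ≠ n·b for every b ∈ R. -/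
/-!
Adjoin a unit: `S = Unitization ℤ R` is a finitely generated `ℤ`-algebra containing `R` as a
finitely generated ideal `J ≠ 0`. Pick a maximal ideal `m ⊇ Ann J`. By Zariski's lemma `S ⧸ m` is
a finite `ℤ`-module, so it has a positive characteristic `p` (`1/2` is not integral over `ℤ`).
If `R` were `p`-divisible, then `J = pJ ⊆ mJ`, and Nakayama gives `c ≡ 1 mod m` with `cJ = 0`,
i.e. `c ∈ Ann J ⊆ m`, which is absurd.
-/

open Ideal

instance Int.isJacobsonRing : IsJacobsonRing ℤ := by
  refine isJacobsonRing_iff_prime_eq.mpr fun P hP => ?_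
  rcases eq_or_ne P ⊥ with rfl | hP0
  · refine le_antisymm (fun x hx => ?_) le_jacobson
    have h₁ := mem_jacobson_bot.mp hx 1
    have h₂ := mem_jacobson_bot.mp hx (-1)
    rw [Int.isUnit_iff] at h₁ h₂
    rw [mem_bot]
    omega
  · have := IsPrime.to_maximal_ideal hP0
    exact jacobson_eq_self_of_isMaximal

theorem ringChar_ne_zero_of_finiteType_int (K : Type*) [Field K] [Algebra ℤ K]
    [Algebra.FiniteType ℤ K] : ringChar K ≠ 0 := by
  intro h
  have : CharZero K := (CharP.ringChar_zero_iff_CharZero K).mp h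
  have := finite_of_finite_type_of_isJacobsonRing ℤ K
  have : Algebra.IsIntegral ℤ K := .of_finite ℤ K
  let f : ℚ →ₐ[ℤ] K :=
    { algebraMap ℚ K with commutes' := fun n => by simp [eq_intCast] }
  have : IsIntegral ℤ (1 / 2 : ℚ) :=
    (isIntegral_algHom_iff f (algebraMap ℚ K).injective).mp (Algebra.IsIntegral.isIntegral _)
  obtain ⟨m, hm⟩ := IsIntegrallyClosed.isIntegral_iff.mp this
  have : (2 * m : ℚ) = 1 := by rw [← eq_intCast (algebraMap ℤ ℚ), hm]; norm_num
  have : 2 * m = 1 := by exact_mod_cast this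
  omega

theorem Ideal.IsMaximal.exists_natCast_mem_of_finiteType_int {S : Type*} [CommRing S]
    [Algebra ℤ S] [Algebra.FiniteType ℤ S] {m : Ideal S} (hm : m.IsMaximal) :
    ∃ p : ℕ, p ≠ 0 ∧ (p : S) ∈ m := by
  let K := S ⧸ m
  let : Field K := Quotient.field m
  have : Algebra.FiniteType ℤ K :=
    .of_surjective (Quotient.mkₐ ℤ m) (Quotient.mkₐ_surjective ℤ m)
  refine ⟨ringChar K, ringChar_ne_zero_of_finiteType_int K, ?_⟩
  rw [← Quotient.eq_zero_iff_mem, map_natCast]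
  exact ringChar.Nat.cast_ringChar

theorem Submodule.annihilator_sup_eq_top_of_le_smul {S M : Type*} [CommRing S] [AddCommGroup M]
    [Module S M] {N : Submodule S M} (hN : N.FG) {I : Ideal S} (hNI : N ≤ I • N) :
    N.annihilator ⊔ I = ⊤ := by
  obtain ⟨c, hcI, hcN⟩ := exists_sub_one_mem_and_smul_eq_zero_of_fg_of_le_smul I N hN hNI
  rw [eq_top_iff_one]
  have hc : c ∈ N.annihilator := mem_annihilator.mpr hcN
  simpa using Submodule.sub_mem_sup hc hcI

theorem NonUnitalSubring.map_mem_of_closure_eq_top {R T F S : Type*} [NonUnitalRing R]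
    [NonUnitalRing T] [FunLike F R T] [NonUnitalRingHomClass F R T] [SetLike S T]
    [NonUnitalSubringClass S T] {A : Set R} (hA : closure A = ⊤) (f : F) {s : S}
    (hAs : ∀ a ∈ A, f a ∈ s) (r : R) : f r ∈ s := by
  have hr : r ∈ closure A := hA ▸ mem_top r
  induction hr using closure_induction with
  | mem x hx => exact hAs x hx
  | zero => simp
  | add x y _ _ hx hy => simpa using add_mem hx hy
  | neg x _ hx => simpa using neg_mem hx
  | mul x y _ _ hx hy => simpa using mul_mem hx hy

theorem Submodule.exists_not_le_natCast_smul_of_fg {S M : Type*} [CommRing S] [Algebra ℤ S]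
    [Algebra.FiniteType ℤ S] [AddCommGroup M] [Module S M] {N : Submodule S M} (hN : N.FG)
    (hN0 : N ≠ ⊥) : ∃ p : ℕ, p ≠ 0 ∧ ¬N ≤ Ideal.span {(p : S)} • N := by
  obtain ⟨m, hm, hNm⟩ := exists_le_maximal _ (mt annihilator_eq_top_iff.mp hN0)
  obtain ⟨p, hp, hpm⟩ := hm.exists_natCast_mem_of_finiteType_int
  refine ⟨p, hp, fun hNp => hm.ne_top (top_le_iff.mp ?_)⟩
  rw [← annihilator_sup_eq_top_of_le_smul hN hNp]
  exact sup_le hNm ((Ideal.span_singleton_le_iff_mem _).mpr hpm)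

namespace Unitization

variable {R : Type*} [NonUnitalRing R]

theorem ker_fstHom_eq_span_inr {A : Set R} (hA : NonUnitalSubring.closure A = ⊤) :
    RingHom.ker (fstHom ℤ R) = span (inr '' A) := by
  -- without a fixed `Ring` structure, `NonUnitalSubringClass (Ideal _) _` is not found
  let : Ring (Unitization ℤ R) := instRing
  refine le_antisymm (fun x hx => ?_) (span_le.mpr ?_)
  · lift x to R using hx
    exact NonUnitalSubring.map_mem_of_closure_eq_top hA (inrNonUnitalAlgHom ℤ R)
      (fun a ha => subset_span (Set.mem_image_of_mem inr ha)) x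
  · rintro _ ⟨a, -, rfl⟩
    exact fst_inr ℤ a

theorem ker_fstHom_fg {A : Set R} (hAfin : A.Finite) (hA : NonUnitalSubring.closure A = ⊤) :
    (RingHom.ker (fstHom ℤ R)).FG := by
  rw [ker_fstHom_eq_span_inr hA]
  exact Submodule.fg_span (hAfin.image _)

theorem ker_fstHom_ne_bot [Nontrivial R] : RingHom.ker (fstHom ℤ R) ≠ ⊥ := by
  obtain ⟨r, hr⟩ := exists_ne (0 : R)
  rw [Submodule.ne_bot_iff]
  exact ⟨r, fst_inr ℤ r, fun h => hr (inr_injective (h.trans (inr_zero ℤ).symm))⟩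

theorem ker_fstHom_le_smul {n : ℕ} (hn : ∀ a : R, ∃ b, a = n • b) :
    RingHom.ker (fstHom ℤ R) ≤ span {(n : Unitization ℤ R)} • RingHom.ker (fstHom ℤ R) := by
  intro x hx
  lift x to R using hx
  obtain ⟨b, rfl⟩ := hn x
  rw [inr_smul, nsmul_eq_mul]
  exact Submodule.smul_mem_smul (mem_span_singleton_self _) (fst_inr ℤ b)

theorem finiteType_int {A : Set R} (hAfin : A.Finite) (hA : NonUnitalSubring.closure A = ⊤) :
    Algebra.FiniteType ℤ (Unitization ℤ R) := by
  let : Ring (Unitization ℤ R) := instRing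
  refine ⟨Subalgebra.fg_def.mpr ⟨_, hAfin.image inr, eq_top_iff.mpr fun x _ => ?_⟩⟩
  rw [← inl_fst_add_inr_snd_eq x, ← algebraMap_eq_inl]
  exact add_mem (Subalgebra.algebraMap_mem _ _) <|
    NonUnitalSubring.map_mem_of_closure_eq_top hA (inrNonUnitalAlgHom ℤ R)
      (fun a ha => Algebra.subset_adjoin (Set.mem_image_of_mem inr ha)) _

end Unitization

theorem stmt_10 {R : Type*} [NonUnitalCommRing R] [Nontrivial R]
    (hfg : ∃ A : Set R, A.Finite ∧ NonUnitalSubring.closure A = ⊤) :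
    ∃ (a : R) (n : ℕ), 1 ≤ n ∧ ∀ b : R, a ≠ n • b := by
  obtain ⟨A, hAfin, hA⟩ := hfg
  have := Unitization.finiteType_int hAfin hA
  -- `by exact` defers these until the `CommRing` instance on `Unitization ℤ R` is chosen
  obtain ⟨p, hp, hnot⟩ := Submodule.exists_not_le_natCast_smul_of_fg (S := Unitization ℤ R)
    (by exact Unitization.ker_fstHom_fg hAfin hA) (by exact Unitization.ker_fstHom_ne_bot)
  by_contra! hdiv
  exact hnot (Unitization.ker_fstHom_le_smul fun a => hdiv a p (Nat.one_le_iff_ne_zero.mpr hp))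
end
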